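/- Let Q̃₁, Q̃₂, Q̃₃, Q̃₄ > 0, q̃₁, q̃₂, q̃₃, q̃₄ ∈ ℝ, m_p, ω ∈ ℝ and ℓ ∈ ℕ, and let V be the four-charge effective potential. Then lim_{r→∞} r·(V(r) − m_p²) = 2(m_p² − 2ω²)·(Q̃₁+Q̃₂+Q̃₃+Q̃₄) + 8ω·(q̃₁Q̃₁+q̃₂Q̃₂+q̃₃Q̃₃+q̃₄Q̃₄). -/

import Mathlib

open Real Filter

/-- The harmonic function `H̃(r) = 1 + 4Q̃/r`. -/
noncomputable def Hq (Q r : ℝ) : ℝ := 1 + 4*Q/r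

/-- The four-charge effective potential of a charged massive scalar in the extremal
four-charge STU black hole background. -/
noncomputable def V4 (Q₁ Q₂ Q₃ Q₄ q₁ q₂ q₃ q₄ mp ω : ℝ) (ℓ : ℕ) (r : ℝ) : ℝ :=
  ω^2 + mp^2 * Real.sqrt (Hq Q₁ r * Hq Q₂ r * Hq Q₃ r * Hq Q₄ r)
    - (ω - (4*q₁*Q₁/(r + 4*Q₁) + 4*q₂*Q₂/(r + 4*Q₂)
            + 4*q₃*Q₃/(r + 4*Q₃) + 4*q₄*Q₄/(r + 4*Q₄)))^2
        * (Hq Q₁ r * Hq Q₂ r * Hq Q₃ r * Hq Q₄ r)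
    + ((ℓ : ℝ)*((ℓ : ℝ) + 1))/r^2

/-!
In the inverse radius `x = 1/r` the potential, now for any finite family of charges, is a smooth
function `W` of `x` near `0` with `W 0 = m_p²`. Hence `r·(V(r) − m_p²) = (W(1/r) − W 0)/(1/r)` is a
difference quotient at `0`, and the limit is `W'(0)`, which the product and chain rules give
from `∏ᵢ (1 + 4Q̃ᵢx)' = 4 Σᵢ Q̃ᵢ` and `(4q̃ᵢQ̃ᵢx/(1 + 4Q̃ᵢx))' = 4q̃ᵢQ̃ᵢ` at `x = 0`.
-/

open Topology Finset

theorem tendsto_mul_sub_comp_inv_of_hasDerivAt {W : ℝ → ℝ} {W' : ℝ} (h : HasDerivAt W W' 0) :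
    Tendsto (fun r => r * (W r⁻¹ - W 0)) atTop (𝓝 W') := by
  refine (h.tendsto_slope_zero_right.comp tendsto_inv_atTop_nhdsGT_zero).congr fun r => ?_
  simp

theorem hasDerivAt_prod_one_add_mul {ι : Type*} (s : Finset ι) (b : ι → ℝ) :
    HasDerivAt (fun x => ∏ i ∈ s, (1 + b i * x)) (∑ i ∈ s, b i) 0 := by
  classical
  simpa using HasDerivAt.fun_finsetProd (u := s) (x := 0)
    fun i _ => ((hasDerivAt_id 0).const_mul (b i)).const_add 1

theorem hasDerivAt_mul_div_one_add_mul (a b : ℝ) :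
    HasDerivAt (fun x => a * x / (1 + b * x)) a 0 := by
  have hnum := (hasDerivAt_id 0).const_mul a
  have hden := ((hasDerivAt_id 0).const_mul b).const_add 1
  simpa using hnum.fun_div hden (by simp)

noncomputable def invRadiusPotential {ι : Type*} (s : Finset ι) (Q q : ι → ℝ) (mp ω : ℝ) (ℓ : ℕ)
    (x : ℝ) : ℝ :=
  ω^2 + mp^2 * √(∏ i ∈ s, (1 + 4 * Q i * x))
    - (ω - ∑ i ∈ s, 4 * q i * Q i * x / (1 + 4 * Q i * x))^2 * ∏ i ∈ s, (1 + 4 * Q i * x)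
    + ℓ * (ℓ + 1) * x^2

theorem invRadiusPotential_zero {ι : Type*} (s : Finset ι) (Q q : ι → ℝ) (mp ω : ℝ) (ℓ : ℕ) :
    invRadiusPotential s Q q mp ω ℓ 0 = mp^2 := by
  simp [invRadiusPotential]

theorem hasDerivAt_invRadiusPotential {ι : Type*} (s : Finset ι) (Q q : ι → ℝ) (mp ω : ℝ) (ℓ : ℕ) :
    HasDerivAt (invRadiusPotential s Q q mp ω ℓ)
      (2 * (mp^2 - 2 * ω^2) * ∑ i ∈ s, Q i + 8 * ω * ∑ i ∈ s, q i * Q i) 0 := by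
  have hP := hasDerivAt_prod_one_add_mul s (fun i => 4 * Q i)
  have hS : HasDerivAt (fun x => ∑ i ∈ s, 4 * q i * Q i * x / (1 + 4 * Q i * x))
      (∑ i ∈ s, 4 * q i * Q i) 0 :=
    HasDerivAt.fun_sum fun i _ => hasDerivAt_mul_div_one_add_mul _ _
  have hW := (((hP.sqrt (by simp)).const_mul (mp^2)).const_add (ω^2)).fun_sub
    ((((hasDerivAt_const 0 ω).fun_sub hS).fun_pow 2).fun_mul hP) |>.fun_add
      ((hasDerivAt_pow 2 0).const_mul (ℓ * (ℓ + 1) : ℝ))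
  refine hW.congr_deriv ?_
  have hqQ : ∑ i ∈ s, 4 * q i * Q i = 4 * ∑ i ∈ s, q i * Q i := by
    simp only [mul_sum, mul_assoc]
  simp [hqQ, ← mul_sum]
  ring

theorem div_add_eq_mul_inv_div_one_add_mul_inv (a b : ℝ) {r : ℝ} (hr : r ≠ 0) :
    a / (r + b) = a * r⁻¹ / (1 + b * r⁻¹) := by
  rw [show 1 + b * r⁻¹ = (r + b) * r⁻¹ by field_simp]
  exact (mul_div_mul_right a (r + b) (inv_ne_zero hr)).symm

theorem V4_eq_invRadiusPotential {Q₁ Q₂ Q₃ Q₄ q₁ q₂ q₃ q₄ mp ω r : ℝ} {ℓ : ℕ} (hr : r ≠ 0) :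
    V4 Q₁ Q₂ Q₃ Q₄ q₁ q₂ q₃ q₄ mp ω ℓ r
      = invRadiusPotential univ ![Q₁, Q₂, Q₃, Q₄] ![q₁, q₂, q₃, q₄] mp ω ℓ r⁻¹ := by
  have hH (Q : ℝ) : Hq Q r = 1 + 4 * Q * r⁻¹ := by rw [Hq, div_eq_mul_inv]
  have hc (q Q : ℝ) : 4 * q * Q / (r + 4 * Q) = 4 * q * Q * r⁻¹ / (1 + 4 * Q * r⁻¹) :=
    div_add_eq_mul_inv_div_one_add_mul_inv _ _ hr
  simp [V4, invRadiusPotential, hH, hc, Fin.sum_univ_four, Fin.prod_univ_four]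
  ring

theorem stmt_16_general (Q₁ Q₂ Q₃ Q₄ q₁ q₂ q₃ q₄ mp ω : ℝ) (ℓ : ℕ) :
    Tendsto (fun r : ℝ => r * (V4 Q₁ Q₂ Q₃ Q₄ q₁ q₂ q₃ q₄ mp ω ℓ r - mp^2)) atTop
      (nhds (2*(mp^2 - 2*ω^2)*(Q₁ + Q₂ + Q₃ + Q₄)
        + 8*ω*(q₁*Q₁ + q₂*Q₂ + q₃*Q₃ + q₄*Q₄))) := by
  have h := tendsto_mul_sub_comp_inv_of_hasDerivAt
    (hasDerivAt_invRadiusPotential univ ![Q₁, Q₂, Q₃, Q₄] ![q₁, q₂, q₃, q₄] mp ω ℓ)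
  simp only [invRadiusPotential_zero, Fin.sum_univ_four] at h
  refine h.congr' ?_
  filter_upwards [eventually_ne_atTop 0] with r hr
  rw [V4_eq_invRadiusPotential hr]

/-- At large `r`, `r·(V(r) − m_p²) → 2(m_p²−2ω²)(Q̃₁+Q̃₂+Q̃₃+Q̃₄) + 8ω(Σᵢ q̃ᵢQ̃ᵢ)`. -/
theorem stmt_16 (Q₁ Q₂ Q₃ Q₄ q₁ q₂ q₃ q₄ mp ω : ℝ) (ℓ : ℕ)
    (hQ₁ : 0 < Q₁) (hQ₂ : 0 < Q₂) (hQ₃ : 0 < Q₃) (hQ₄ : 0 < Q₄) :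
    Tendsto (fun r : ℝ => r * (V4 Q₁ Q₂ Q₃ Q₄ q₁ q₂ q₃ q₄ mp ω ℓ r - mp^2)) atTop
      (nhds (2*(mp^2 - 2*ω^2)*(Q₁ + Q₂ + Q₃ + Q₄)
        + 8*ω*(q₁*Q₁ + q₂*Q₂ + q₃*Q₃ + q₄*Q₄))) :=
  stmt_16_general Q₁ Q₂ Q₃ Q₄ q₁ q₂ q₃ q₄ mp ω ℓ
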